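/- Let I be an interval of ℝ and φ₀, φ₁ : I → I strictly increasing contractive maps with fixed points y₁ < y₀. Then for every x ∈ [y₁, y₀], φ₀₁(x) := φ₁(φ₀(x)) < φ₀(φ₁(x)) =: φ₁₀(x). -/

import Mathlib

/-!
For `x ∈ [y₁, y₀]` the point `x` lies between `φ₁ x ≤ x ≤ φ₀ x`, and `φ₁ x < φ₀ x`.
Contractivity of `φ₁` on `[x, φ₀ x]` and of `φ₀` on `[φ₁ x, x]` gives
`φ₁ (φ₀ x) - φ₁ x ≤ φ₀ x - x` and `φ₀ x - φ₀ (φ₁ x) ≤ x - φ₁ x`, at least one of them strict;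
adding the two yields `φ₁ (φ₀ x) < φ₀ (φ₁ x)`.
-/

def ContractiveOn (φ : ℝ → ℝ) (I : Set ℝ) : Prop :=
  ∀ x ∈ I, ∀ y ∈ I, x < y → φ y - φ x < y - x

namespace ContractiveOn

variable {φ : ℝ → ℝ} {I : Set ℝ} {x y p : ℝ}

theorem sub_le (h : ContractiveOn φ I) (hx : x ∈ I) (hy : y ∈ I) (hxy : x ≤ y) :
    φ y - φ x ≤ y - x := by
  rcases hxy.lt_or_eq with hxy | rfl
  · exact (h x hx y hy hxy).le
  · simp

theorem lt_apply_of_lt_fixedPoint (h : ContractiveOn φ I) (hp : p ∈ I) (hfix : φ p = p)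
    (hx : x ∈ I) (hxp : x < p) : x < φ x := by
  linarith [h x hx p hp hxp]

theorem apply_lt_of_fixedPoint_lt (h : ContractiveOn φ I) (hp : p ∈ I) (hfix : φ p = p)
    (hx : x ∈ I) (hpx : p < x) : φ x < x := by
  linarith [h p hp x hx hpx]

theorem le_apply_of_le_fixedPoint (h : ContractiveOn φ I) (hp : p ∈ I) (hfix : φ p = p)
    (hx : x ∈ I) (hxp : x ≤ p) : x ≤ φ x := by
  linarith [h.sub_le hx hp hxp]

theorem apply_le_of_fixedPoint_le (h : ContractiveOn φ I) (hp : p ∈ I) (hfix : φ p = p)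
    (hx : x ∈ I) (hpx : p ≤ x) : φ x ≤ x := by
  linarith [h.sub_le hp hx hpx]

end ContractiveOn

theorem comp_lt_comp_of_apply_le_le_apply {φ0 φ1 : ℝ → ℝ} {I : Set ℝ} {x : ℝ}
    (h0 : ContractiveOn φ0 I) (h1 : ContractiveOn φ1 I)
    (hx : x ∈ I) (h0x : φ0 x ∈ I) (h1x : φ1 x ∈ I)
    (h1le : φ1 x ≤ x) (hle0 : x ≤ φ0 x) (h10 : φ1 x < φ0 x) :
    φ1 (φ0 x) < φ0 (φ1 x) := by
  rcases h1le.lt_or_eq with h1lt | h1eq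
  · have h0step := h0 (φ1 x) h1x x hx h1lt
    have h1step := h1.sub_le hx h0x hle0
    linarith
  · have h1step := h1 x hx (φ0 x) h0x (by rwa [h1eq] at h10)
    rw [h1eq]
    linarith

theorem stmt_10_general (I : Set ℝ) (hI : I.OrdConnected) (φ0 φ1 : ℝ → ℝ)
    (h0maps : Set.MapsTo φ0 I I) (h1maps : Set.MapsTo φ1 I I)
    (h0contr : ∀ x ∈ I, ∀ y ∈ I, x < y → φ0 y - φ0 x < y - x)
    (h1contr : ∀ x ∈ I, ∀ y ∈ I, x < y → φ1 y - φ1 x < y - x)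
    (y0 y1 : ℝ) (hy0I : y0 ∈ I) (hy1I : y1 ∈ I)
    (hfix0 : φ0 y0 = y0)
    (hfix1 : φ1 y1 = y1)
    (hlt : y1 < y0)
    (x : ℝ) (hx : x ∈ Set.Icc y1 y0) :
    φ1 (φ0 x) < φ0 (φ1 x) := by
  have h0 : ContractiveOn φ0 I := h0contr
  have h1 : ContractiveOn φ1 I := h1contr
  have hxI : x ∈ I := hI.out hy1I hy0I hx
  have h1le : φ1 x ≤ x := h1.apply_le_of_fixedPoint_le hy1I hfix1 hxI hx.1
  have hle0 : x ≤ φ0 x := h0.le_apply_of_le_fixedPoint hy0I hfix0 hxI hx.2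
  have h10 : φ1 x < φ0 x := by
    rcases hx.1.lt_or_eq with hy1x | rfl
    · exact (h1.apply_lt_of_fixedPoint_lt hy1I hfix1 hxI hy1x).trans_le hle0
    · exact h1le.trans_lt (h0.lt_apply_of_lt_fixedPoint hy0I hfix0 hxI hlt)
  exact comp_lt_comp_of_apply_le_le_apply h0 h1 hxI (h0maps hxI) (h1maps hxI) h1le hle0 h10

/-- If `φ₀, φ₁ : I → I` are strictly increasing contractive maps on an
interval `I` with unique fixed points `y₁ < y₀` (of `φ₁` and `φ₀` respectively), then
for every `x ∈ [y₁, y₀]` one has `φ₀₁(x) = φ₁(φ₀(x)) < φ₀(φ₁(x)) = φ₁₀(x)`. -/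
theorem stmt_10 (I : Set ℝ) (hI : I.OrdConnected) (φ0 φ1 : ℝ → ℝ)
    (h0maps : Set.MapsTo φ0 I I) (h1maps : Set.MapsTo φ1 I I)
    (h0inc : ∀ x ∈ I, ∀ y ∈ I, x < y → φ0 x < φ0 y)
    (h1inc : ∀ x ∈ I, ∀ y ∈ I, x < y → φ1 x < φ1 y)
    (h0contr : ∀ x ∈ I, ∀ y ∈ I, x < y → φ0 y - φ0 x < y - x)
    (h1contr : ∀ x ∈ I, ∀ y ∈ I, x < y → φ1 y - φ1 x < y - x)
    (y0 y1 : ℝ) (hy0I : y0 ∈ I) (hy1I : y1 ∈ I)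
    (hfix0 : φ0 y0 = y0) (huniq0 : ∀ z ∈ I, φ0 z = z → z = y0)
    (hfix1 : φ1 y1 = y1) (huniq1 : ∀ z ∈ I, φ1 z = z → z = y1)
    (hlt : y1 < y0)
    (x : ℝ) (hx : x ∈ Set.Icc y1 y0) :
    φ1 (φ0 x) < φ0 (φ1 x) :=
  stmt_10_general I hI φ0 φ1 h0maps h1maps h0contr h1contr y0 y1 hy0I hy1I hfix0 hfix1 hlt x hx
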